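/- arXiv:2309.04356 — 3 statements merged into one kernel-verified Lean document; each statement's English description precedes it below -/
import Mathlib

section
/- Let X be a real Hilbert space, A : X → X a strongly monotone Lipschitz continuous operator with monotonicity constant m > 0, S : C([0,T];X) → C([0,T];X) a history-dependent operator with constant L, K ⊆ X nonempty closed convex, j : X → ℝ convex and lower semicontinuous, and f ∈ C([0,T];X). If u₁, u₂ ∈ C([0,T];X) both satisfy, for every t ∈ [0,T], uᵢ(t) ∈ K and (Auᵢ(t), v - uᵢ(t)) + (Suᵢ(t), v - uᵢ(t)) + j(v) - j(uᵢ(t)) ≥ (f(t), v - uᵢ(t)) for all v ∈ K, then u₁ = u₂. -/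
/-!
Testing the inequality for `u₁` with `v = u₂ t` and the one for `u₂` with `v = u₁ t` and adding,
the terms in `f` and `j` cancel, and strong monotonicity of `A` leaves
`m ‖u₁ t - u₂ t‖ ≤ ‖S u₁ t - S u₂ t‖ ≤ L ∫₀ᵗ ‖u₁ s - u₂ s‖ ds`.
Grönwall's inequality, applied to the primitive of `‖u₁ - u₂‖`, which vanishes at `0`,
then forces `u₁ = u₂`.
-/

open Set
open scoped InnerProductSpace

theorem eqOn_zero_of_le_mul_integral {φ : ℝ → ℝ} {a b C : ℝ} (hφ : ContinuousOn φ (Icc a b))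
    (hφ_nonneg : ∀ t ∈ Icc a b, 0 ≤ φ t) (hle : ∀ t ∈ Icc a b, φ t ≤ C * ∫ s in a..t, φ s) :
    EqOn φ 0 (Icc a b) := by
  rcases lt_or_ge b a with hba | hab
  · simp [Icc_eq_empty_of_lt hba]
  -- Extend `φ` continuously to `ℝ` so that its primitive is differentiable everywhere.
  set ψ := IccExtend hab ((Icc a b).domRestrict φ)
  have hψ : Continuous ψ := (continuousOn_iff_continuous_domRestrict.mp hφ).Icc_extend'
  have hψφ : EqOn ψ φ (Icc a b) := fun t ht => IccExtend_of_mem hab _ ht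
  set F : ℝ → ℝ := fun t => ∫ s in a..t, ψ s
  have hF' : ∀ t, HasDerivAt F (ψ t) t := fun t => (hψ.integral_hasStrictDerivAt a t).hasDerivAt
  have hFφ : ∀ t ∈ Icc a b, F t = ∫ s in a..t, φ s := fun t ht =>
    intervalIntegral.integral_congr fun s hs =>
      hψφ (Icc_subset_Icc_right ht.2 (uIcc_of_le ht.1 ▸ hs))
  have hF_nonneg : ∀ t ∈ Icc a b, 0 ≤ F t := fun t ht =>
    intervalIntegral.integral_nonneg ht.1 fun s hs =>
      (hψφ (Icc_subset_Icc_right ht.2 hs)).symm ▸ hφ_nonneg s (Icc_subset_Icc_right ht.2 hs)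
  have hF_zero : ∀ t ∈ Icc a b, F t = 0 :=
    eq_zero_of_abs_deriv_le_mul_abs_self_of_eq_zero_right (K := C)
      (fun t _ => (hF' t).continuousAt.continuousWithinAt)
      (fun t _ => (hF' t).hasDerivWithinAt) intervalIntegral.integral_same
      fun t ht => by
        have ht' := Ico_subset_Icc_self ht
        rw [Real.norm_eq_abs, Real.norm_eq_abs, abs_of_nonneg (hF_nonneg t ht'), hψφ ht',
          abs_of_nonneg (hφ_nonneg t ht'), hFφ t ht']
        exact hle t ht'
  intro t ht
  have := hle t ht
  rw [← hFφ t ht, hF_zero t ht, mul_zero] at this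
  exact le_antisymm this (hφ_nonneg t ht)

theorem mul_norm_sub_le_of_variationalInequality {X : Type*} [NormedAddCommGroup X]
    [InnerProductSpace ℝ X] {m : ℝ} {A : X → X}
    (hA : ∀ x y : X, m * ‖x - y‖ ^ 2 ≤ ⟪A x - A y, x - y⟫_ℝ) {K : Set X} {j : X → ℝ}
    {f g₁ g₂ x₁ x₂ : X}
    (h₁ : x₁ ∈ K ∧ ∀ v ∈ K, ⟪f, v - x₁⟫_ℝ ≤ ⟪A x₁, v - x₁⟫_ℝ + ⟪g₁, v - x₁⟫_ℝ + j v - j x₁)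
    (h₂ : x₂ ∈ K ∧ ∀ v ∈ K, ⟪f, v - x₂⟫_ℝ ≤ ⟪A x₂, v - x₂⟫_ℝ + ⟪g₂, v - x₂⟫_ℝ + j v - j x₂) :
    m * ‖x₁ - x₂‖ ≤ ‖g₁ - g₂‖ := by
  obtain ⟨hx₁, hvi₁⟩ := h₁
  obtain ⟨hx₂, hvi₂⟩ := h₂
  have hsum : ⟪A x₁ - A x₂, x₁ - x₂⟫_ℝ ≤ ⟪g₁ - g₂, x₂ - x₁⟫_ℝ := by
    have := add_le_add (hvi₁ x₂ hx₂) (hvi₂ x₁ hx₁)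
    simp only [inner_sub_left, inner_sub_right] at this ⊢
    linarith
  have hsq : m * ‖x₁ - x₂‖ ^ 2 ≤ ‖g₁ - g₂‖ * ‖x₁ - x₂‖ :=
    calc m * ‖x₁ - x₂‖ ^ 2 ≤ ⟪A x₁ - A x₂, x₁ - x₂⟫_ℝ := hA x₁ x₂
      _ ≤ ⟪g₁ - g₂, x₂ - x₁⟫_ℝ := hsum
      _ ≤ ‖g₁ - g₂‖ * ‖x₂ - x₁‖ := real_inner_le_norm _ _
      _ = ‖g₁ - g₂‖ * ‖x₁ - x₂‖ := by rw [norm_sub_rev x₂]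
  rcases (norm_nonneg (x₁ - x₂)).eq_or_lt with h0 | hpos
  · rw [← h0, mul_zero]
    exact norm_nonneg _
  · exact le_of_mul_le_mul_right (by rwa [sq, ← mul_assoc] at hsq) hpos

theorem stmt4_general {X : Type*} [NormedAddCommGroup X] [InnerProductSpace ℝ X]
    {T m L : ℝ} (hm : 0 < m)
    (A : X → X)
    (hAmon : ∀ x y : X, m * ‖x - y‖ ^ 2 ≤ ⟪A x - A y, x - y⟫_ℝ)
    (S : (ℝ → X) → (ℝ → X))
    (hS : ∀ u v : ℝ → X, ∀ t ∈ Icc (0:ℝ) T,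
      ‖S u t - S v t‖ ≤ L * ∫ s in (0:ℝ)..t, ‖u s - v s‖)
    (K : Set X)
    (j : X → ℝ)
    (f : ℝ → X)
    (u₁ u₂ : ℝ → X) (hu₁ : ContinuousOn u₁ (Icc 0 T)) (hu₂ : ContinuousOn u₂ (Icc 0 T))
    (h1 : ∀ t ∈ Icc (0:ℝ) T, u₁ t ∈ K ∧ ∀ v ∈ K,
      ⟪f t, v - u₁ t⟫_ℝ ≤
        ⟪A (u₁ t), v - u₁ t⟫_ℝ + ⟪S u₁ t, v - u₁ t⟫_ℝ + j v - j (u₁ t))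
    (h2 : ∀ t ∈ Icc (0:ℝ) T, u₂ t ∈ K ∧ ∀ v ∈ K,
      ⟪f t, v - u₂ t⟫_ℝ ≤
        ⟪A (u₂ t), v - u₂ t⟫_ℝ + ⟪S u₂ t, v - u₂ t⟫_ℝ + j v - j (u₂ t)) :
    ∀ t ∈ Icc (0:ℝ) T, u₁ t = u₂ t := by
  have hest : ∀ t ∈ Icc (0:ℝ) T,
      ‖u₁ t - u₂ t‖ ≤ L / m * ∫ s in (0:ℝ)..t, ‖u₁ s - u₂ s‖ := fun t ht => by
    rw [div_mul_eq_mul_div, le_div_iff₀ hm, mul_comm]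
    exact (mul_norm_sub_le_of_variationalInequality hAmon (h1 t ht) (h2 t ht)).trans
      (hS u₁ u₂ t ht)
  have hzero := eqOn_zero_of_le_mul_integral (hu₁.sub hu₂).norm (fun _ _ => norm_nonneg _) hest
  intro t ht
  exact sub_eq_zero.mp (norm_eq_zero.mp (hzero ht))

theorem stmt4 {X : Type*} [NormedAddCommGroup X] [InnerProductSpace ℝ X]
    {T m L LA : ℝ} (hT : 0 < T) (hm : 0 < m) (hL : 0 < L)
    (A : X → X)
    (hAmon : ∀ x y : X, m * ‖x - y‖ ^ 2 ≤ ⟪A x - A y, x - y⟫_ℝ)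
    (hALip : ∀ x y : X, ‖A x - A y‖ ≤ LA * ‖x - y‖)
    (S : (ℝ → X) → (ℝ → X))
    (hS : ∀ u v : ℝ → X, ∀ t ∈ Icc (0:ℝ) T,
      ‖S u t - S v t‖ ≤ L * ∫ s in (0:ℝ)..t, ‖u s - v s‖)
    (K : Set X) (hK : K.Nonempty) (hKc : IsClosed K) (hKconv : Convex ℝ K)
    (j : X → ℝ) (hj : ConvexOn ℝ univ j) (hjlsc : LowerSemicontinuous j)
    (f : ℝ → X) (hf : ContinuousOn f (Icc 0 T))
    (u₁ u₂ : ℝ → X) (hu₁ : ContinuousOn u₁ (Icc 0 T)) (hu₂ : ContinuousOn u₂ (Icc 0 T))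
    (h1 : ∀ t ∈ Icc (0:ℝ) T, u₁ t ∈ K ∧ ∀ v ∈ K,
      ⟪f t, v - u₁ t⟫_ℝ ≤
        ⟪A (u₁ t), v - u₁ t⟫_ℝ + ⟪S u₁ t, v - u₁ t⟫_ℝ + j v - j (u₁ t))
    (h2 : ∀ t ∈ Icc (0:ℝ) T, u₂ t ∈ K ∧ ∀ v ∈ K,
      ⟪f t, v - u₂ t⟫_ℝ ≤
        ⟪A (u₂ t), v - u₂ t⟫_ℝ + ⟪S u₂ t, v - u₂ t⟫_ℝ + j v - j (u₂ t)) :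
    ∀ t ∈ Icc (0:ℝ) T, u₁ t = u₂ t :=
  stmt4_general hm A hAmon S hS K j f u₁ u₂ hu₁ hu₂ h1 h2
end

section
/- Let X be a real Hilbert space, j : X → ℝ convex, positively homogeneous with j(0)=0, σ, f, u ∈ X, with (σ, v - u) + j(v) - j(u) ≥ (f, v - u) for all v ∈ X. Define Σ = {τ ∈ X : (τ, v) + j(v) ≥ (f, v) for all v ∈ X}. Then σ ∈ Σ, and moreover (τ - σ, u) ≥ 0 for all τ ∈ Σ. -/
/-!
Testing the variational inequality with `v = u + w` and using the subadditivity of the sublinear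
functional `j` gives `σ ∈ Σ`. Testing it with `v = 0` and `v = 2u` gives the equality
`(f, u) = (σ, u) + j(u)`, so for `τ ∈ Σ` tested with `v = u` one gets `(σ, u) ≤ (τ, u)`.
-/

open Set
open scoped InnerProductSpace

theorem ConvexOn.map_add_le_of_homogeneous {E : Type*} [AddCommGroup E] [Module ℝ E]
    {j : E → ℝ} (hconv : ConvexOn ℝ univ j)
    (hpos : ∀ c : ℝ, 0 ≤ c → ∀ v, j (c • v) = c * j v) (a b : E) :
    j (a + b) ≤ j a + j b := by
  have hmid := hconv.2 (mem_univ a) (mem_univ b) (by norm_num : (0 : ℝ) ≤ 1 / 2)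
    (by norm_num : (0 : ℝ) ≤ 1 / 2) (by norm_num)
  have hscale : j (a + b) = 2 * j ((1 / 2 : ℝ) • a + (1 / 2 : ℝ) • b) := by
    rw [← hpos 2 (by norm_num), smul_add, smul_smul, smul_smul]
    norm_num
  rw [smul_eq_mul, smul_eq_mul] at hmid
  linarith

section VariationalInequality

variable {X : Type*} [NormedAddCommGroup X] [InnerProductSpace ℝ X]

/-- The admissible stress set `Σ` of the dual problem. -/
def admissibleStress (j : X → ℝ) (f : X) : Set X :=
  {τ | ∀ v : X, ⟪f, v⟫_ℝ ≤ ⟪τ, v⟫_ℝ + j v}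

variable {j : X → ℝ} {σ f u : X}

theorem mem_admissibleStress_of_variationalInequality
    (hsub : ∀ a b : X, j (a + b) ≤ j a + j b)
    (h : ∀ v : X, ⟪f, v - u⟫_ℝ ≤ ⟪σ, v - u⟫_ℝ + j v - j u) :
    σ ∈ admissibleStress j f := by
  intro w
  have hw := h (u + w)
  rw [add_sub_cancel_left] at hw
  linarith [hsub u w]

theorem inner_eq_of_variationalInequality
    (hpos : ∀ c : ℝ, 0 ≤ c → ∀ v, j (c • v) = c * j v)
    (h : ∀ v : X, ⟪f, v - u⟫_ℝ ≤ ⟪σ, v - u⟫_ℝ + j v - j u) :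
    ⟪f, u⟫_ℝ = ⟪σ, u⟫_ℝ + j u := by
  have hj0 : j 0 = 0 := by simpa using hpos 0 le_rfl 0
  have hzero := h 0
  have htwice := h ((2 : ℝ) • u)
  rw [zero_sub, inner_neg_right, inner_neg_right, hj0] at hzero
  rw [two_smul, add_sub_cancel_right, ← two_smul ℝ u, hpos 2 zero_le_two] at htwice
  linarith

theorem inner_le_inner_of_mem_admissibleStress
    (hpos : ∀ c : ℝ, 0 ≤ c → ∀ v, j (c • v) = c * j v)
    (h : ∀ v : X, ⟪f, v - u⟫_ℝ ≤ ⟪σ, v - u⟫_ℝ + j v - j u)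
    {τ : X} (hτ : τ ∈ admissibleStress j f) :
    ⟪σ, u⟫_ℝ ≤ ⟪τ, u⟫_ℝ := by
  linarith [hτ u, inner_eq_of_variationalInequality hpos h]

end VariationalInequality

theorem stmt9_general {X : Type*} [NormedAddCommGroup X] [InnerProductSpace ℝ X]
    (j : X → ℝ) (hconv : ConvexOn ℝ univ j)
    (hpos : ∀ c : ℝ, 0 ≤ c → ∀ v, j (c • v) = c * j v)
    (σ f u : X)
    (h : ∀ v : X, ⟪f, v - u⟫_ℝ ≤ ⟪σ, v - u⟫_ℝ + j v - j u) :
    σ ∈ {τ : X | ∀ v : X, ⟪f, v⟫_ℝ ≤ ⟪τ, v⟫_ℝ + j v} ∧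
      ∀ τ ∈ {τ : X | ∀ v : X, ⟪f, v⟫_ℝ ≤ ⟪τ, v⟫_ℝ + j v}, 0 ≤ ⟪τ - σ, u⟫_ℝ := by
  refine ⟨mem_admissibleStress_of_variationalInequality
    (hconv.map_add_le_of_homogeneous hpos) h, fun τ hτ => ?_⟩
  rw [inner_sub_left, sub_nonneg]
  exact inner_le_inner_of_mem_admissibleStress hpos h hτ

theorem stmt9 {X : Type*} [NormedAddCommGroup X] [InnerProductSpace ℝ X]
    (j : X → ℝ) (hconv : ConvexOn ℝ univ j)
    (hpos : ∀ c : ℝ, 0 ≤ c → ∀ v, j (c • v) = c * j v) (hj0 : j 0 = 0)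
    (σ f u : X)
    (h : ∀ v : X, ⟪f, v - u⟫_ℝ ≤ ⟪σ, v - u⟫_ℝ + j v - j u) :
    σ ∈ {τ : X | ∀ v : X, ⟪f, v⟫_ℝ ≤ ⟪τ, v⟫_ℝ + j v} ∧
      ∀ τ ∈ {τ : X | ∀ v : X, ⟪f, v⟫_ℝ ≤ ⟪τ, v⟫_ℝ + j v}, 0 ≤ ⟪τ - σ, u⟫_ℝ :=
  stmt9_general j hconv hpos σ f u h
end

section
/- Let V be a real Hilbert space, A : V → V strongly monotone with constant m_A and Lipschitz, S : C([0,T];V) → C([0,T];V) history-dependent with constant c₁, γ : V → L²(Γ₃) bounded linear with norm c₀. For i = 1, 2 let F_i ∈ L²(Γ₃) with F_i ≥ 0, f^i ∈ C([0,T];V), and let u_i ∈ C([0,T];V) solve, for all t and all v ∈ V: (Au_i(t), v - u_i(t)) + (Su_i(t), v - u_i(t)) + ∫_{Γ₃} F_i (γv)⁺ da - ∫_{Γ₃} F_i (γu_i(t))⁺ da ≥ (f^i(t), v - u_i(t)). Then there exists C > 0, independent of F_i and f^i, such that ‖u₁ - u₂‖_{C([0,T];V)} ≤ C(‖F₁ -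 F₂‖_{L²(Γ₃)} + ‖f¹ - f²‖_{C([0,T];V)}). -/
open Set MeasureTheory
open scoped InnerProductSpace

/-!
Test the inequality for `u₁(t)` with `v = u₂(t)` and the one for `u₂(t)` with `v = u₁(t)`, and
add. Strong monotonicity of `A` bounds `m_A ‖u₁(t) - u₂(t)‖²` from below; above, the contact terms
combine into `⟪F₁ - F₂, (γu₂)⁺ - (γu₁)⁺⟫`, which is at most `‖F₁ - F₂‖ ‖γ‖ ‖u₁(t) - u₂(t)‖`
because `r ↦ r⁺` is 1-Lipschitz, and the history-dependent term is at most
`|c₁| ‖u₁(t) - u₂(t)‖ ∫₀ᵗ ‖u₁ - u₂‖`. Dividing by `‖u₁(t) - u₂(t)‖` leaves an integral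
inequality, and Grönwall's lemma bounds `‖u₁(t) - u₂(t)‖` by `e^{|c₁|T/m_A}/m_A` times the data.
-/

namespace MeasureTheory.Lp

variable {Γ : Type*} [MeasurableSpace Γ] {μ : Measure Γ}

theorem norm_posPart_sub_posPart_le {p : ENNReal} [Fact (1 ≤ p)] (f g : Lp ℝ p μ) :
    ‖posPart f - posPart g‖ ≤ ‖f - g‖ := by
  simpa [posPart] using lipschitzWith_pos_part.norm_compLp_sub_le (max_eq_right le_rfl) f g

theorem integral_mul_max_eq_inner_posPart (f g : Lp ℝ 2 μ) :
    ∫ a, (f : Γ → ℝ) a * max ((g : Γ → ℝ) a) 0 ∂μ = ⟪f, posPart g⟫_ℝ := by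
  rw [L2.inner_def]
  refine integral_congr_ae ?_
  filter_upwards [coeFn_posPart g] with a ha
  simp [ha, RCLike.inner_apply, mul_comm]

theorem integral_mul_max_sub_le (f₁ f₂ g₁ g₂ : Lp ℝ 2 μ) :
    (∫ a, (f₁ : Γ → ℝ) a * max ((g₂ : Γ → ℝ) a) 0 ∂μ) -
        (∫ a, (f₁ : Γ → ℝ) a * max ((g₁ : Γ → ℝ) a) 0 ∂μ) +
      ((∫ a, (f₂ : Γ → ℝ) a * max ((g₁ : Γ → ℝ) a) 0 ∂μ) -
        ∫ a, (f₂ : Γ → ℝ) a * max ((g₂ : Γ → ℝ) a) 0 ∂μ) ≤ ‖f₁ - f₂‖ * ‖g₁ - g₂‖ := by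
  simp only [integral_mul_max_eq_inner_posPart]
  calc ⟪f₁, posPart g₂⟫_ℝ - ⟪f₁, posPart g₁⟫_ℝ + (⟪f₂, posPart g₁⟫_ℝ - ⟪f₂, posPart g₂⟫_ℝ)
      = ⟪f₁ - f₂, posPart g₂ - posPart g₁⟫_ℝ := by
        simp only [inner_sub_left, inner_sub_right]; ring
    _ ≤ ‖f₁ - f₂‖ * ‖posPart g₂ - posPart g₁‖ := real_inner_le_norm _ _
    _ ≤ ‖f₁ - f₂‖ * ‖g₁ - g₂‖ := by
        gcongr
        rw [norm_sub_rev g₁]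
        exact norm_posPart_sub_posPart_le g₂ g₁

end MeasureTheory.Lp

theorem mul_norm_sub_le_of_variational_ineq {V : Type*} [NormedAddCommGroup V]
    [InnerProductSpace ℝ V] {m L : ℝ} (hL : 0 ≤ L) {u₁ u₂ a₁ a₂ w₁ w₂ f₁ f₂ : V}
    {j₁ j₂ : V → ℝ} (hmon : m * ‖u₁ - u₂‖ ^ 2 ≤ ⟪a₁ - a₂, u₁ - u₂⟫_ℝ)
    (hj : j₁ u₂ - j₁ u₁ + (j₂ u₁ - j₂ u₂) ≤ L * ‖u₁ - u₂‖)
    (h₁ : ⟪f₁, u₂ - u₁⟫_ℝ ≤ ⟪a₁, u₂ - u₁⟫_ℝ + ⟪w₁, u₂ - u₁⟫_ℝ + j₁ u₂ - j₁ u₁)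
    (h₂ : ⟪f₂, u₁ - u₂⟫_ℝ ≤ ⟪a₂, u₁ - u₂⟫_ℝ + ⟪w₂, u₁ - u₂⟫_ℝ + j₂ u₁ - j₂ u₂) :
    m * ‖u₁ - u₂‖ ≤ ‖f₁ - f₂‖ + ‖w₁ - w₂‖ + L := by
  have hsq : m * ‖u₁ - u₂‖ ^ 2 ≤ (‖f₁ - f₂‖ + ‖w₁ - w₂‖ + L) * ‖u₁ - u₂‖ := by
    have hf := real_inner_le_norm (f₁ - f₂) (u₁ - u₂)
    have hw := real_inner_le_norm (w₂ - w₁) (u₁ - u₂)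
    rw [norm_sub_rev w₂] at hw
    rw [← neg_sub u₁ u₂] at h₁
    simp only [inner_neg_right, inner_sub_left] at h₁ hmon hf hw
    linarith
  rcases (norm_nonneg (u₁ - u₂)).eq_or_lt with hd | hd
  · rw [← hd, mul_zero]
    positivity
  · exact le_of_mul_le_mul_right (by linarith) hd

theorem le_mul_exp_of_le_add_mul_integral {D : ℝ → ℝ} {K β a b : ℝ} (hβ : 0 ≤ β)
    (hD : ContinuousOn D (Icc a b)) (h : ∀ x ∈ Icc a b, D x ≤ K + β * ∫ y in a..x, D y) :
    ∀ x ∈ Icc a b, D x ≤ K * Real.exp (β * (x - a)) := by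
  set I : ℝ → ℝ := fun x => ∫ y in a..x, D y
  have hDint : ∀ x ∈ Icc a b, IntervalIntegrable D volume a x := fun x hx =>
    (hD.mono (uIcc_subset_Icc ⟨le_rfl, hx.1.trans hx.2⟩ hx)).intervalIntegrable
  have hI : ContinuousOn I (Icc a b) := fun x hx =>
    (intervalIntegral.continuousOn_primitive_interval'
      (hDint b (right_mem_Icc.2 (hx.1.trans hx.2))) left_mem_uIcc).mono Icc_subset_uIcc x hx
  have hI' : ∀ x ∈ Ico a b, HasDerivWithinAt I (D x) (Ici x) x := by
    intro x hx
    have : Fact (x ∈ Icc a b) := ⟨Ico_subset_Icc_self hx⟩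
    exact (intervalIntegral.integral_hasDerivWithinAt_right (s := Icc a b)
      (hDint x (Ico_subset_Icc_self hx)) (hD.stronglyMeasurableAtFilter_nhdsWithin
        measurableSet_Icc x) (hD x (Ico_subset_Icc_self hx))).mono_of_mem_nhdsWithin
      (Icc_mem_nhdsGE_of_mem hx)
  -- `I' = D ≤ β I + K` with `I a = 0`: the differential form of Grönwall's inequality applies.
  have hIle := le_gronwallBound_of_liminf_deriv_right_le (K := β) (ε := K) hI
    (fun x hx _ hr => (hI' x hx).liminf_right_slope_le hr) intervalIntegral.integral_same.le
    (fun x hx => (h x (Ico_subset_Icc_self hx)).trans_eq (add_comm _ _))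
  intro x hx
  calc D x ≤ K + β * gronwallBound 0 β K (x - a) := (h x hx).trans (by gcongr; exact hIle x hx)
    _ = K * Real.exp (β * (x - a)) := by
        rcases hβ.eq_or_lt with rfl | hβ
        · simp [gronwallBound_K0]
        · rw [gronwallBound_of_K_ne_0 hβ.ne']
          field_simp
          ring

theorem stmt17_general {V : Type*} [NormedAddCommGroup V] [InnerProductSpace ℝ V]
    {Γ : Type*} [MeasurableSpace Γ] (μ : Measure Γ)
    {T mA c₁ : ℝ} (hmA : 0 < mA)
    (γ : V →L[ℝ] Lp ℝ 2 μ)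
    (A : V → V)
    (hAmon : ∀ x y : V, mA * ‖x - y‖ ^ 2 ≤ ⟪A x - A y, x - y⟫_ℝ)
    (S : (ℝ → V) → (ℝ → V))
    (hS : ∀ u v : ℝ → V, ∀ t ∈ Icc (0:ℝ) T,
      ‖S u t - S v t‖ ≤ c₁ * ∫ s in (0:ℝ)..t, ‖u s - v s‖) :
    ∃ C > 0, ∀ F₁ F₂ : Lp ℝ 2 μ, 0 ≤ᵐ[μ] (F₁ : Γ → ℝ) → 0 ≤ᵐ[μ] (F₂ : Γ → ℝ) →
      ∀ f₁ f₂ u₁ u₂ : ℝ → V,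
        ContinuousOn f₁ (Icc 0 T) → ContinuousOn f₂ (Icc 0 T) →
        ContinuousOn u₁ (Icc 0 T) → ContinuousOn u₂ (Icc 0 T) →
        (∀ t ∈ Icc (0:ℝ) T, ∀ v : V,
          ⟪f₁ t, v - u₁ t⟫_ℝ ≤
            ⟪A (u₁ t), v - u₁ t⟫_ℝ + ⟪S u₁ t, v - u₁ t⟫_ℝ +
              (∫ a, (F₁ : Γ → ℝ) a * max ((γ v : Γ → ℝ) a) 0 ∂μ) -
              ∫ a, (F₁ : Γ → ℝ) a * max ((γ (u₁ t) : Γ → ℝ) a) 0 ∂μ) →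
        (∀ t ∈ Icc (0:ℝ) T, ∀ v : V,
          ⟪f₂ t, v - u₂ t⟫_ℝ ≤
            ⟪A (u₂ t), v - u₂ t⟫_ℝ + ⟪S u₂ t, v - u₂ t⟫_ℝ +
              (∫ a, (F₂ : Γ → ℝ) a * max ((γ v : Γ → ℝ) a) 0 ∂μ) -
              ∫ a, (F₂ : Γ → ℝ) a * max ((γ (u₂ t) : Γ → ℝ) a) 0 ∂μ) →
        ∀ t ∈ Icc (0:ℝ) T,
          ‖u₁ t - u₂ t‖ ≤ C * (‖F₁ - F₂‖ + ⨆ s : Icc (0:ℝ) T, ‖f₁ s - f₂ s‖) := by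
  refine ⟨Real.exp (|c₁| / mA * T) * max 1 ‖γ‖ / mA, by positivity, ?_⟩
  intro F₁ F₂ _ _ f₁ f₂ u₁ u₂ hf₁ hf₂ hu₁ hu₂ h₁ h₂ t ht
  set M := ⨆ s : Icc (0:ℝ) T, ‖f₁ s - f₂ s‖
  have hfM : ∀ s ∈ Icc (0:ℝ) T, ‖f₁ s - f₂ s‖ ≤ M := by
    have hfc : ContinuousOn (fun s => ‖f₁ s - f₂ s‖) (Icc 0 T) := (hf₁.sub hf₂).norm
    exact fun s hs => le_ciSup (f := fun s : Icc (0:ℝ) T => ‖f₁ s - f₂ s‖)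
      (by simpa only [image_eq_range] using isCompact_Icc.bddAbove_image hfc) ⟨s, hs⟩
  have hM : 0 ≤ M := Real.iSup_nonneg fun _ => norm_nonneg _
  set K := (M + ‖F₁ - F₂‖ * ‖γ‖) / mA
  have hintegral : ∀ s ∈ Icc (0:ℝ) T, ‖u₁ s - u₂ s‖ ≤
      K + |c₁| / mA * ∫ r in (0:ℝ)..s, ‖u₁ r - u₂ r‖ := by
    intro s hs
    have hcontact : ∀ x y : V, ‖F₁ - F₂‖ * ‖γ x - γ y‖ ≤ ‖F₁ - F₂‖ * ‖γ‖ * ‖x - y‖ :=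
      fun x y => by rw [← map_sub, mul_assoc]; gcongr; exact γ.le_opNorm _
    have hvi := mul_norm_sub_le_of_variational_ineq (by positivity)
      (j₁ := fun v => ∫ a, (F₁ : Γ → ℝ) a * max ((γ v : Γ → ℝ) a) 0 ∂μ)
      (j₂ := fun v => ∫ a, (F₂ : Γ → ℝ) a * max ((γ v : Γ → ℝ) a) 0 ∂μ) (hAmon (u₁ s) (u₂ s))
      ((Lp.integral_mul_max_sub_le F₁ F₂ _ _).trans (hcontact _ _)) (h₁ s hs (u₂ s))
      (h₂ s hs (u₁ s))
    have hhist : ‖S u₁ s - S u₂ s‖ ≤ |c₁| * ∫ r in (0:ℝ)..s, ‖u₁ r - u₂ r‖ :=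
      (hS u₁ u₂ s hs).trans (mul_le_mul_of_nonneg_right (le_abs_self c₁)
        (intervalIntegral.integral_nonneg hs.1 fun _ _ => norm_nonneg _))
    rw [div_mul_eq_mul_div, ← add_div, le_div_iff₀' hmA]
    linarith [hfM s hs]
  have hu : ContinuousOn (fun s => ‖u₁ s - u₂ s‖) (Icc 0 T) := (hu₁.sub hu₂).norm
  have hgronwall := le_mul_exp_of_le_add_mul_integral (by positivity) hu hintegral t ht
  rw [sub_zero] at hgronwall
  calc ‖u₁ t - u₂ t‖ ≤ K * Real.exp (|c₁| / mA * t) := hgronwall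
    _ ≤ K * Real.exp (|c₁| / mA * T) := by gcongr; exact ht.2
    _ = Real.exp (|c₁| / mA * T) * ((M + ‖F₁ - F₂‖ * ‖γ‖) / mA) := mul_comm _ _
    _ ≤ Real.exp (|c₁| / mA * T) * (max 1 ‖γ‖ * (‖F₁ - F₂‖ + M) / mA) := by
        gcongr
        nlinarith [le_max_left 1 ‖γ‖, le_max_right 1 ‖γ‖, norm_nonneg (F₁ - F₂)]
    _ = Real.exp (|c₁| / mA * T) * max 1 ‖γ‖ / mA * (‖F₁ - F₂‖ + M) := by ring

theorem stmt17 {V : Type*} [NormedAddCommGroup V] [InnerProductSpace ℝ V]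
    {Γ : Type*} [MeasurableSpace Γ] (μ : Measure Γ)
    {T mA c₁ LA : ℝ} (hT : 0 < T) (hmA : 0 < mA) (hc₁ : 0 < c₁)
    (γ : V →L[ℝ] Lp ℝ 2 μ)
    (A : V → V)
    (hAmon : ∀ x y : V, mA * ‖x - y‖ ^ 2 ≤ ⟪A x - A y, x - y⟫_ℝ)
    (hALip : ∀ x y : V, ‖A x - A y‖ ≤ LA * ‖x - y‖)
    (S : (ℝ → V) → (ℝ → V))
    (hS : ∀ u v : ℝ → V, ∀ t ∈ Icc (0:ℝ) T,
      ‖S u t - S v t‖ ≤ c₁ * ∫ s in (0:ℝ)..t, ‖u s - v s‖) :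
    ∃ C > 0, ∀ F₁ F₂ : Lp ℝ 2 μ, 0 ≤ᵐ[μ] (F₁ : Γ → ℝ) → 0 ≤ᵐ[μ] (F₂ : Γ → ℝ) →
      ∀ f₁ f₂ u₁ u₂ : ℝ → V,
        ContinuousOn f₁ (Icc 0 T) → ContinuousOn f₂ (Icc 0 T) →
        ContinuousOn u₁ (Icc 0 T) → ContinuousOn u₂ (Icc 0 T) →
        (∀ t ∈ Icc (0:ℝ) T, ∀ v : V,
          ⟪f₁ t, v - u₁ t⟫_ℝ ≤
            ⟪A (u₁ t), v - u₁ t⟫_ℝ + ⟪S u₁ t, v - u₁ t⟫_ℝ +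
              (∫ a, (F₁ : Γ → ℝ) a * max ((γ v : Γ → ℝ) a) 0 ∂μ) -
              ∫ a, (F₁ : Γ → ℝ) a * max ((γ (u₁ t) : Γ → ℝ) a) 0 ∂μ) →
        (∀ t ∈ Icc (0:ℝ) T, ∀ v : V,
          ⟪f₂ t, v - u₂ t⟫_ℝ ≤
            ⟪A (u₂ t), v - u₂ t⟫_ℝ + ⟪S u₂ t, v - u₂ t⟫_ℝ +
              (∫ a, (F₂ : Γ → ℝ) a * max ((γ v : Γ → ℝ) a) 0 ∂μ) -
              ∫ a, (F₂ : Γ → ℝ) a * max ((γ (u₂ t) : Γ → ℝ) a) 0 ∂μ) →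
        ∀ t ∈ Icc (0:ℝ) T,
          ‖u₁ t - u₂ t‖ ≤ C * (‖F₁ - F₂‖ + ⨆ s : Icc (0:ℝ) T, ‖f₁ s - f₂ s‖) :=
  stmt17_general μ hmA γ A hAmon S hS
end
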